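/- arXiv:2001.11352 — 2 statements merged into one kernel-verified Lean document; each statement's English description precedes it below -/
import Mathlib

section
/- Let C be an abelian category and 𝒲 a class of objects of C. Suppose 0→X→f Y→f' Z→0 and 0→K→g L→g' Y→0 are short exact sequences in C, each of which is both Hom(𝒲,−)-exact and Hom(−,𝒲)-exact. Then there exist an object N of C and morphisms d: K→N, e: N→X, h: N→L, h': L→Z satisfying h∘d = g, g'∘h = f∘e and h' = f'∘g', such that 0→K→d N→e X→0 and 0→N→h L→h' Z→0 are short exact sequences, and all four short exact sequences (the two given ones and the two new ones) are both Hom(𝒲,−)-exact and Hom(−,𝒲)-exact. -/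
/-!
Take `N = X ×_Y L`. Pulling `0 → K → L → Y → 0` back along `f` gives `0 → K → N → X → 0`, and
since `f` is mono, `N → L` is the kernel of `L → Y → Z`. Each `Hom(W, -)`- or `Hom(-, W)`-exactness
reduces to surjectivity of the last map, which comes from the given sequences; only the
surjectivity of `Hom(L, W) → Hom(N, W)` needs both of them at once.
-/

open CategoryTheory Category Limits

universe v u

variable {C : Type u} [Category.{v} C] [Abelian C]

def SES {A B X : C} (f : A ⟶ B) (g : B ⟶ X) : Prop :=
  ∃ w : f ≫ g = 0, (CategoryTheory.ShortComplex.mk f g w).ShortExact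

def CovExact (𝒲 : Set C) {A B X : C} (f : A ⟶ B) (g : B ⟶ X) : Prop :=
  ∀ W ∈ 𝒲,
    (Function.Injective fun u : W ⟶ A => u ≫ f) ∧
    (∀ v : W ⟶ B, v ≫ g = 0 → ∃ u : W ⟶ A, u ≫ f = v) ∧
    (Function.Surjective fun v : W ⟶ B => v ≫ g)

def ContraExact (𝒲 : Set C) {A B X : C} (f : A ⟶ B) (g : B ⟶ X) : Prop :=
  ∀ W ∈ 𝒲,
    (Function.Injective fun u : X ⟶ W => g ≫ u) ∧
    (∀ v : B ⟶ W, f ≫ v = 0 → ∃ u : X ⟶ W, g ≫ u = v) ∧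
    (Function.Surjective fun v : B ⟶ W => f ≫ v)

namespace SES

variable {A B X : C} {f : A ⟶ B} {g : B ⟶ X}

lemma epi (hs : SES f g) : Epi g :=
  hs.choose_spec.epi_g

lemma covExact_of_surjective {𝒲 : Set C} (hs : SES f g)
    (hsurj : ∀ W ∈ 𝒲, Function.Surjective fun v : W ⟶ B => v ≫ g) :
    CovExact 𝒲 f g := by
  obtain ⟨_, hse⟩ := hs
  have := hse.mono_f
  exact fun W hW => ⟨fun u u' huu' => (cancel_mono f).mp huu',
    fun v hv => hse.exact.lift' v hv, hsurj W hW⟩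

lemma contraExact_of_surjective {𝒲 : Set C} (hs : SES f g)
    (hsurj : ∀ W ∈ 𝒲, Function.Surjective fun v : B ⟶ W => f ≫ v) :
    ContraExact 𝒲 f g := by
  obtain ⟨_, hse⟩ := hs
  have := hse.epi_g
  exact fun W hW => ⟨fun u u' huu' => (cancel_epi g).mp huu',
    fun v hv => hse.exact.desc' v hv, hsurj W hW⟩

lemma of_lift (w : f ≫ g = 0) [Mono f] [Epi g]
    (lift : ∀ {T : C} (k : T ⟶ B), k ≫ g = 0 → ∃ l : T ⟶ A, l ≫ f = k) : SES f g := by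
  refine ⟨w, .mk' (ShortComplex.exact_of_f_is_kernel _ (KernelFork.IsLimit.ofι' f w ?_)) ‹_› ‹_›⟩
  intro T k hk
  exact ⟨(lift k hk).choose, (lift k hk).choose_spec⟩

end SES

section Pullback

variable {X Y Z K L : C}

lemma SES.exists_pullback_fst {g : K ⟶ L} {g' : L ⟶ Y} (hs : SES g g') (f : X ⟶ Y) :
    ∃ d : K ⟶ pullback f g', d ≫ pullback.snd f g' = g ∧ SES d (pullback.fst f g') := by
  obtain ⟨w, hse⟩ := hs
  have := hse.mono_f
  have := hse.epi_g
  have := Abelian.epi_pullback_of_epi_g f g'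
  let d : K ⟶ pullback f g' := pullback.lift 0 g (by rw [zero_comp, w])
  have hd : d ≫ pullback.snd f g' = g := pullback.lift_snd _ _ _
  have := mono_of_mono_fac hd
  refine ⟨d, hd, SES.of_lift (pullback.lift_fst _ _ _) fun k hk => ?_⟩
  have hk' : (k ≫ pullback.snd f g') ≫ g' = 0 := by
    rw [assoc, ← pullback.condition, ← assoc, hk, zero_comp]
  refine ⟨hse.exact.lift _ hk', pullback.hom_ext ?_ ?_⟩
  · rw [assoc, pullback.lift_fst, comp_zero, hk]
  · rw [assoc, hd, hse.exact.lift_f]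

lemma SES.pullback_snd {f : X ⟶ Y} {f' : Y ⟶ Z} (hs : SES f f') (g' : L ⟶ Y) [Epi g'] :
    SES (pullback.snd f g') (g' ≫ f') := by
  obtain ⟨w, hse⟩ := hs
  have := hse.mono_f
  have := hse.epi_g
  refine SES.of_lift (by rw [← assoc, ← pullback.condition, assoc, w, comp_zero])
    fun k hk => ?_
  rw [← assoc] at hk
  exact ⟨pullback.lift _ k (hse.exact.lift_f _ hk), pullback.lift_snd _ _ _⟩

lemma pullback_fst_surjective_comp {W : C} (f : X ⟶ Y) {g' : L ⟶ Y}
    (hg' : Function.Surjective fun t : W ⟶ L => t ≫ g') :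
    Function.Surjective fun v : W ⟶ pullback f g' => v ≫ pullback.fst f g' := fun x => by
  obtain ⟨t, ht⟩ := hg' (x ≫ f)
  exact ⟨pullback.lift x t ht.symm, pullback.lift_fst _ _ _⟩

end Pullback

/-- A map `u : N ⟶ W` extends along `g` to some `t : L ⟶ W`; then `u - h ≫ t` vanishes on `K`,
so factors through `e`, and that factor extends along `f`. -/
lemma SES.surjective_precomp_of_comm {K N X L Y W : C} {d : K ⟶ N} {e : N ⟶ X}
    (hs : SES d e) {g : K ⟶ L} {h : N ⟶ L} {f : X ⟶ Y} {g' : L ⟶ Y}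
    (hdh : d ≫ h = g) (sq : h ≫ g' = e ≫ f)
    (hg : Function.Surjective fun t : L ⟶ W => g ≫ t)
    (hf : Function.Surjective fun y : Y ⟶ W => f ≫ y) :
    Function.Surjective fun t : L ⟶ W => h ≫ t := fun u => by
  obtain ⟨_, hse⟩ := hs
  have := hse.epi_g
  obtain ⟨t, ht : g ≫ t = d ≫ u⟩ := hg (d ≫ u)
  have hu : d ≫ (u - h ≫ t) = 0 := by
    rw [Preadditive.comp_sub, ← assoc, hdh, ht, sub_self]
  obtain ⟨x, hx⟩ := hse.exact.desc' _ hu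
  obtain ⟨y, hy : f ≫ y = x⟩ := hf x
  refine ⟨t + g' ≫ y, ?_⟩
  change h ≫ (t + g' ≫ y) = u
  rw [Preadditive.comp_add, ← assoc, sq, assoc, hy, hx, add_sub_cancel]

/-- Given both-exact short exact sequences `0→X→Y→Z→0` and `0→K→L→Y→0`,
there are `N` and morphisms `d, e, h, h'` forming both-exact short exact sequences
`0→K→N→X→0` and `0→N→L→Z→0` compatible with the given data. -/
theorem stmt_4 (𝒲 : Set C) {X Y Z K L : C}
    (f : X ⟶ Y) (f' : Y ⟶ Z) (g : K ⟶ L) (g' : L ⟶ Y)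
    (h1 : SES f f') (h2 : SES g g')
    (h1cov : CovExact 𝒲 f f') (h1con : ContraExact 𝒲 f f')
    (h2cov : CovExact 𝒲 g g') (h2con : ContraExact 𝒲 g g') :
    ∃ (N : C) (d : K ⟶ N) (e : N ⟶ X) (h : N ⟶ L) (h' : L ⟶ Z),
      d ≫ h = g ∧ h ≫ g' = e ≫ f ∧ h' = g' ≫ f' ∧
      SES d e ∧ SES h h' ∧
      CovExact 𝒲 d e ∧ ContraExact 𝒲 d e ∧
      CovExact 𝒲 h h' ∧ ContraExact 𝒲 h h' := by
  obtain ⟨d, hdh, hd⟩ := h2.exists_pullback_fst f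
  have := h2.epi
  have hh := h1.pullback_snd g'
  have sq := (pullback.condition (f := f) (g := g')).symm
  refine ⟨pullback f g', d, pullback.fst f g', pullback.snd f g', g' ≫ f', hdh, sq, rfl,
    hd, hh, ?_, ?_, ?_, ?_⟩
  · exact hd.covExact_of_surjective fun W hW => pullback_fst_surjective_comp f (h2cov W hW).2.2
  · refine hd.contraExact_of_surjective fun W hW u => ?_
    obtain ⟨t, ht⟩ := (h2con W hW).2.2 u
    exact ⟨pullback.snd f g' ≫ t, by simpa only [← assoc, hdh] using ht⟩
  · refine hh.covExact_of_surjective fun W hW => ?_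
    simpa only [Function.comp_def, assoc] using (h1cov W hW).2.2.comp (h2cov W hW).2.2
  · exact hh.contraExact_of_surjective fun W hW =>
      hd.surjective_precomp_of_comm hdh sq (h2con W hW).2.2 (h1con W hW).2.2
end

section
/- Let C be an abelian category and 𝒲 a class of objects of C. Suppose 0→X→f Y→f' Z→0 and 0→Y→g L→g' K→0 are short exact sequences in C, each of which is both Hom(𝒲,−)-exact and Hom(−,𝒲)-exact. Then there exist an object N of C and morphisms h: X→L, h': L→N, d: Z→N, e: N→K satisfying h = g∘f, h'∘g = d∘f' and e∘h' = g', such that 0→X→h L→h' N→0 and 0→Z→d N→e K→0 are short exact sequences, and all four short exact sequences (the two given ones and the two new ones) are both Hom(𝒲,−)-exact and Hom(−,𝒲)-exact. -/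
open CategoryTheory Category Limits

universe v u

variable {C : Type u} [Category.{v} C] [Abelian C]

open scoped Pseudoelement
open CategoryTheory.Abelian

/-- Given both-exact short exact sequences `0→X→Y→Z→0` and `0→Y→L→K→0`,
there are `N` and morphisms `h, h', d, e` forming both-exact short exact sequences
`0→X→L→N→0` and `0→Z→N→K→0` compatible with the given data. -/
theorem stmt_5 (𝒲 : Set C) {X Y Z K L : C}
    (f : X ⟶ Y) (f' : Y ⟶ Z) (g : Y ⟶ L) (g' : L ⟶ K)
    (h1 : SES f f') (h2 : SES g g')
    (h1cov : CovExact 𝒲 f f') (h1con : ContraExact 𝒲 f f')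
    (h2cov : CovExact 𝒲 g g') (h2con : ContraExact 𝒲 g g') :
    ∃ (N : C) (h : X ⟶ L) (h' : L ⟶ N) (d : Z ⟶ N) (e : N ⟶ K),
      h = f ≫ g ∧ g ≫ h' = f' ≫ d ∧ h' ≫ e = g' ∧
      SES h h' ∧ SES d e ∧
      CovExact 𝒲 h h' ∧ ContraExact 𝒲 h h' ∧
      CovExact 𝒲 d e ∧ ContraExact 𝒲 d e := by
  obtain ⟨w1, hse1⟩ := h1
  obtain ⟨w2, hse2⟩ := h2
  haveI : Mono f := hse1.mono_f
  haveI : Epi f' := hse1.epi_g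
  haveI : Mono g := hse2.mono_f
  haveI : Epi g' := hse2.epi_g
  set h : X ⟶ L := f ≫ g with hh
  haveI : Mono h := mono_comp f g
  set N : C := cokernel h
  set h' : L ⟶ N := cokernel.π h with hh'
  have whh' : h ≫ h' = 0 := cokernel.condition h
  -- d : Z ⟶ N with f' ≫ d = g ≫ h'
  have hfd : f ≫ (g ≫ h') = 0 := by rw [← assoc]; exact whh'
  set d : Z ⟶ N := hse1.exact.desc (g ≫ h') hfd with hd
  have hcomm : g ≫ h' = f' ≫ d := (hse1.exact.g_desc (g ≫ h') hfd).symm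
  -- e : N ⟶ K with h' ≫ e = g'
  have hhg' : h ≫ g' = 0 := by rw [hh, assoc, w2, comp_zero]
  set e : N ⟶ K := cokernel.desc h g' hhg' with he
  have hcomm2 : h' ≫ e = g' := cokernel.π_desc h g' hhg'
  -- the first new sequence is short exact
  have seshh' : SES h h' := by
    refine ⟨whh', ?_⟩
    exact { exact := ShortComplex.exact_of_g_is_cokernel _ (cokernelIsCokernel h) }
  obtain ⟨whh'0, hsehh'⟩ := seshh'
  -- d ≫ e = 0
  have wde : d ≫ e = 0 := by
    rw [← cancel_epi f', ← assoc, ← hcomm, assoc, hcomm2, w2, comp_zero]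
  -- Mono d, via pseudoelements
  haveI monod : Mono d := by
    apply Pseudoelement.mono_of_zero_of_map_zero
    intro a ha
    obtain ⟨y, hy⟩ := Pseudoelement.pseudo_surjective_of_epi f' a
    have h1' : (h' : L ⟶ N) ((g : Y ⟶ L) y) = 0 := by
      rw [← Pseudoelement.comp_apply, hcomm, Pseudoelement.comp_apply, hy, ha]
    obtain ⟨x, hx⟩ := Pseudoelement.pseudo_exact_of_exact hsehh'.exact _ h1'
    have hx' : (g : Y ⟶ L) ((f : X ⟶ Y) x) = (g : Y ⟶ L) y := by
      rw [← Pseudoelement.comp_apply]; exact hx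
    have := Pseudoelement.pseudo_injective_of_mono g hx'
    rw [← hy, ← this, ← Pseudoelement.comp_apply, w1, Pseudoelement.zero_apply]
  -- Epi e
  haveI epie : Epi e := by
    have : Epi (h' ≫ e) := by rw [hcomm2]; infer_instance
    exact epi_of_epi h' e
  -- Exactness of (d, e), via pseudoelements
  have exde : (ShortComplex.mk d e wde).Exact := by
    apply Pseudoelement.exact_of_pseudo_exact
    intro b hb
    obtain ⟨l, hl⟩ := Pseudoelement.pseudo_surjective_of_epi h' b
    have hg'l : (g' : L ⟶ K) l = 0 := by
      rw [← hcomm2, Pseudoelement.comp_apply, hl]; exact hb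
    obtain ⟨y, hy⟩ := Pseudoelement.pseudo_exact_of_exact hse2.exact _ hg'l
    refine ⟨(f' : Y ⟶ Z) y, ?_⟩
    rw [← Pseudoelement.comp_apply, ← hcomm, Pseudoelement.comp_apply, hy, hl]
  have sesde : SES d e := ⟨wde, { exact := exde }⟩
  refine ⟨N, h, h', d, e, rfl, hcomm, hcomm2, ⟨whh', hsehh'⟩, sesde, ?_, ?_, ?_, ?_⟩
  · -- CovExact h h'
    intro W hW
    refine ⟨fun u v huv => by simpa using (cancel_mono h).mp huv, ?_, ?_⟩
    · intro v hv
      exact ⟨hsehh'.exact.lift v hv, hsehh'.exact.lift_f v hv⟩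
    · intro w
      obtain ⟨v, hv⟩ := (h2cov W hW).2.2 (w ≫ e)
      simp only at hv
      have ht : (w - v ≫ h') ≫ e = 0 := by
        rw [Preadditive.sub_comp, assoc, hcomm2, hv, sub_self]
      have hz := exde.lift_f _ ht
      set z := exde.lift _ ht with hzdef
      obtain ⟨y, hy⟩ := (h1cov W hW).2.2 z
      simp only at hy
      have hz' : z ≫ d = w - v ≫ h' := hz
      have hy' : y ≫ f' = z := hy
      refine ⟨v + y ≫ g, ?_⟩
      show (v + y ≫ g) ≫ h' = w
      rw [Preadditive.add_comp, assoc, hcomm, ← assoc, hy', hz']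
      abel
  · -- ContraExact h h'
    intro W hW
    refine ⟨fun u v huv => by simpa using (cancel_epi h').mp huv, ?_, ?_⟩
    · intro v hv
      exact ⟨cokernel.desc h v hv, cokernel.π_desc h v hv⟩
    · intro φ
      obtain ⟨ψ, hψ⟩ := (h1con W hW).2.2 φ
      obtain ⟨χ, hχ⟩ := (h2con W hW).2.2 ψ
      simp only at hψ hχ
      exact ⟨χ, by show h ≫ χ = φ; rw [hh, assoc, hχ, hψ]⟩
  · -- CovExact d e
    intro W hW
    refine ⟨fun u v huv => by simpa using (cancel_mono d).mp huv, ?_, ?_⟩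
    · intro v hv
      exact ⟨exde.lift v hv, exde.lift_f v hv⟩
    · intro w
      obtain ⟨v, hv⟩ := (h2cov W hW).2.2 w
      simp only at hv
      exact ⟨v ≫ h', by simpa [assoc, hcomm2] using hv⟩
  · -- ContraExact d e
    intro W hW
    refine ⟨fun u v huv => by simpa using (cancel_epi e).mp huv, ?_, ?_⟩
    · intro v hv
      exact ⟨exde.desc v hv, exde.g_desc v hv⟩
    · intro φ
      obtain ⟨χ, hχ⟩ := (h2con W hW).2.2 (f' ≫ φ)
      simp only at hχ
      have hhχ : h ≫ χ = 0 := by rw [hh, assoc, hχ, ← assoc, w1, zero_comp]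
      refine ⟨cokernel.desc h χ hhχ, ?_⟩
      rw [← cancel_epi f', ← assoc, ← hcomm, assoc, cokernel.π_desc, hχ]
end
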